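/- arXiv:2602.15566 — 7 statements merged into one kernel-verified Lean document; each statement's English description precedes it below -/
import Mathlib

section
/- Let v be an additive valuation on goods M = {1,...,m} with v(1) ≥ v(2) ≥ ... ≥ v(m), m ≥ 2n, and suppose μ^{⌈3n/2⌉}(M) = 1 (the 1-out-of-⌈3n/2⌉ maximin share equals 1). Then for every k with n ≤ k ≤ ⌈3n/2⌉, it holds that μ^k(M \ {k+1, ..., 3n−k}) ≥ 1. In particular μ^n(M \ {n+1,...,2n}) ≥ 1. -/
open Finset

/-- Additive value of a bundle of goods. -/
noncomputable def bundleVal (v : ℕ → ℝ) (S : Finset ℕ) : ℝ := ∑ g ∈ S, v g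

/-- `P` is a partition of `M` into `d` (possibly empty) bundles. -/
def IsPartition (M : Finset ℕ) (d : ℕ) (P : Fin d → Finset ℕ) : Prop :=
  (∀ i j : Fin d, i ≠ j → Disjoint (P i) (P j)) ∧ Finset.univ.biUnion P = M

/-- The 1-out-of-`d` maximin share of `M` under valuation `v`. -/
noncomputable def mms (v : ℕ → ℝ) (M : Finset ℕ) (d : ℕ) : ℝ :=
  sSup {x : ℝ | ∃ P : Fin d → Finset ℕ, IsPartition M d P ∧ ∀ i, x ≤ bundleVal v (P i)}

/-- `x` is achievable: a partition of `T` into `c` bundles each of value at least `x`. -/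
def Ach (v : ℕ → ℝ) (T : Finset ℕ) (c : ℕ) (x : ℝ) : Prop :=
  ∃ P : Fin c → Finset ℕ, IsPartition T c P ∧ ∀ i, x ≤ bundleVal v (P i)

lemma mms_eq_sSup (v : ℕ → ℝ) (T : Finset ℕ) (c : ℕ) :
    mms v T c = sSup {x | Ach v T c x} := rfl

lemma bundleVal_mono {v : ℕ → ℝ} (hv : ∀ g, 0 ≤ v g) {S T : Finset ℕ} (h : S ⊆ T) :
    bundleVal v S ≤ bundleVal v T :=
  Finset.sum_le_sum_of_subset_of_nonneg h (fun g _ _ => hv g)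

lemma bundleVal_erase {v : ℕ → ℝ} {S : Finset ℕ} {a : ℕ} (ha : a ∈ S) :
    bundleVal v (S.erase a) = bundleVal v S - v a :=
  Finset.sum_erase_eq_sub ha

lemma bundleVal_union {v : ℕ → ℝ} {S T : Finset ℕ} (h : Disjoint S T) :
    bundleVal v (S ∪ T) = bundleVal v S + bundleVal v T := Finset.sum_union h

lemma single_le_bundleVal {v : ℕ → ℝ} (hv : ∀ g, 0 ≤ v g) {S : Finset ℕ} {a : ℕ} (ha : a ∈ S) :
    v a ≤ bundleVal v S :=
  Finset.single_le_sum (fun g _ => hv g) ha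

lemma IsPartition.mem_unique {T : Finset ℕ} {K : ℕ} {P : Fin K → Finset ℕ}
    (hP : IsPartition T K P) {i j : Fin K} {a : ℕ} (hi : a ∈ P i) (hj : a ∈ P j) : i = j := by
  by_contra h
  exact Finset.disjoint_left.mp (hP.1 i j h) hi hj

lemma IsPartition.exists_mem {T : Finset ℕ} {K : ℕ} {P : Fin K → Finset ℕ}
    (hP : IsPartition T K P) {a : ℕ} (ha : a ∈ T) : ∃ i, a ∈ P i := by
  rw [← hP.2] at ha
  simpa using Finset.mem_biUnion.mp ha

lemma IsPartition.remove {T : Finset ℕ} {K : ℕ} {P : Fin K → Finset ℕ}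
    (hP : IsPartition T K P) {i : Fin K} {a : ℕ} (ha : a ∈ P i) :
    IsPartition (T.erase a) K (Function.update P i ((P i).erase a)) := by
  obtain ⟨hdisj, hun⟩ := hP
  constructor
  · intro p q hpq
    rcases eq_or_ne p i with rfl | hp
    · rw [Function.update_self, Function.update_of_ne (Ne.symm hpq)]
      exact (hdisj p q hpq).mono_left (erase_subset _ _)
    · rw [Function.update_of_ne hp]
      rcases eq_or_ne q i with rfl | hq
      · rw [Function.update_self]
        exact (hdisj p q hpq).mono_right (erase_subset _ _)
      · rw [Function.update_of_ne hq]
        exact hdisj p q hpq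
  · ext x
    simp only [Finset.mem_biUnion, Finset.mem_erase, Finset.mem_univ, true_and]
    constructor
    · rintro ⟨j, hj⟩
      rcases eq_or_ne j i with rfl | hji
      · rw [Function.update_self, Finset.mem_erase] at hj
        exact ⟨hj.1, by rw [← hun]; exact Finset.mem_biUnion.mpr ⟨j, Finset.mem_univ _, hj.2⟩⟩
      · rw [Function.update_of_ne hji] at hj
        refine ⟨?_, by rw [← hun]; exact Finset.mem_biUnion.mpr ⟨j, Finset.mem_univ _, hj⟩⟩
        rintro rfl
        exact hji (IsPartition.mem_unique ⟨hdisj, hun⟩ hj ha)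
    · rintro ⟨hxa, hxT⟩
      rw [← hun] at hxT
      obtain ⟨j, -, hj⟩ := Finset.mem_biUnion.mp hxT
      rcases eq_or_ne j i with rfl | hji
      · exact ⟨j, by rw [Function.update_self]; exact Finset.mem_erase.mpr ⟨hxa, hj⟩⟩
      · exact ⟨j, by rw [Function.update_of_ne hji]; exact hj⟩

lemma IsPartition.move {T : Finset ℕ} {K : ℕ} {P : Fin K → Finset ℕ}
    (hP : IsPartition T K P) {i j : Fin K} (hij : i ≠ j) {S : Finset ℕ} (hS : S ⊆ P i) :
    IsPartition T K (Function.update (Function.update P i (P i \ S)) j (P j ∪ S)) := by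
  obtain ⟨hdisj, hun⟩ := hP
  have eval : ∀ r : Fin K, Function.update (Function.update P i (P i \ S)) j (P j ∪ S) r =
      if r = j then P j ∪ S else if r = i then P i \ S else P r := by
    intro r
    rcases eq_or_ne r j with rfl | hrj
    · simp
    · rw [Function.update_of_ne hrj, if_neg hrj]
      rcases eq_or_ne r i with rfl | hri
      · simp
      · rw [Function.update_of_ne hri, if_neg hri]
  constructor
  · intro p q hpq
    rw [eval p, eval q]
    rcases eq_or_ne p j with rfl | hpj
    · rw [if_pos rfl, if_neg (Ne.symm hpq)]
      rcases eq_or_ne q i with rfl | hqi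
      · rw [if_pos rfl]
        exact Finset.disjoint_union_left.mpr
          ⟨(hdisj _ _ hpq).mono_right sdiff_subset, Finset.sdiff_disjoint.symm⟩
      · rw [if_neg hqi]
        exact Finset.disjoint_union_left.mpr
          ⟨hdisj _ _ hpq, (hdisj i q (by rintro rfl; exact hqi rfl)).mono_left hS⟩
    · rw [if_neg hpj]
      rcases eq_or_ne p i with rfl | hpi
      · rw [if_pos rfl]
        rcases eq_or_ne q j with rfl | hqj
        · rw [if_pos rfl]
          exact Finset.disjoint_union_right.mpr
            ⟨(hdisj _ _ hpq).mono_left sdiff_subset, Finset.sdiff_disjoint⟩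
        · rw [if_neg hqj, if_neg (Ne.symm hpq)]
          exact (hdisj _ _ hpq).mono_left sdiff_subset
      · rw [if_neg hpi]
        rcases eq_or_ne q j with rfl | hqj
        · rw [if_pos rfl]
          exact Finset.disjoint_union_right.mpr
            ⟨hdisj _ _ hpq, ((hdisj p i hpi).mono_right hS)⟩
        · rw [if_neg hqj]
          rcases eq_or_ne q i with rfl | hqi
          · rw [if_pos rfl]
            exact (hdisj _ _ hpq).mono_right sdiff_subset
          · rw [if_neg hqi]
            exact hdisj _ _ hpq
  · ext x
    rw [← hun]
    simp only [Finset.mem_biUnion, Finset.mem_univ, true_and]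
    constructor
    · rintro ⟨r, hr⟩
      rw [eval r] at hr
      split_ifs at hr with h1 h2
      · rcases Finset.mem_union.mp hr with h | h
        · exact ⟨j, h⟩
        · exact ⟨i, hS h⟩
      · exact ⟨i, (Finset.mem_sdiff.mp hr).1⟩
      · exact ⟨r, hr⟩
    · rintro ⟨r, hr⟩
      by_cases hxS : x ∈ S
      · exact ⟨j, by rw [eval j, if_pos rfl]; exact Finset.mem_union_right _ hxS⟩
      · refine ⟨r, ?_⟩
        rw [eval r]
        rcases eq_or_ne r j with rfl | hrj
        · rw [if_pos rfl]; exact Finset.mem_union_left _ hr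
        · rw [if_neg hrj]
          rcases eq_or_ne r i with rfl | hri
          · rw [if_pos rfl]; exact Finset.mem_sdiff.mpr ⟨hr, hxS⟩
          · rw [if_neg hri]; exact hr

lemma compress {v : ℕ → ℝ} {x : ℝ} {k : ℕ} {T : Finset ℕ} {P : Fin (k+1) → Finset ℕ}
    (hP : IsPartition T (k+1) P) {i0 : Fin (k+1)} (h0 : P i0 = ∅)
    (hx : ∀ i, i ≠ i0 → x ≤ bundleVal v (P i)) : Ach v T k x := by
  refine ⟨fun j => P (i0.succAbove j), ⟨?_, ?_⟩, fun j => hx _ (Fin.succAbove_ne i0 j)⟩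
  · intro i j hij
    exact hP.1 _ _ (fun h => hij (Fin.succAbove_right_injective h))
  · ext t
    rw [← hP.2]
    simp only [Finset.mem_biUnion, Finset.mem_univ, true_and]
    constructor
    · rintro ⟨j, hj⟩; exact ⟨_, hj⟩
    · rintro ⟨i, hi⟩
      rcases eq_or_ne i i0 with rfl | hne
      · rw [h0] at hi; exact absurd hi (Finset.notMem_empty t)
      · obtain ⟨j, rfl⟩ := Fin.exists_succAbove_eq hne
        exact ⟨j, hi⟩

lemma step_single {v : ℕ → ℝ} (hv : ∀ g, 0 ≤ v g) {x : ℝ} {k : ℕ} (hk : 1 ≤ k)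
    {T : Finset ℕ} {a : ℕ} (ha : a ∈ T)
    (h : Ach v T (k+1) x) : Ach v (T.erase a) k x := by
  obtain ⟨P, hP, hPx⟩ := h
  obtain ⟨i1, hi1⟩ := hP.exists_mem ha
  have : Nontrivial (Fin (k+1)) := Fin.nontrivial_iff_two_le.mpr (by omega)
  obtain ⟨i3, hi3⟩ := exists_ne i1
  set U1 : Fin (k+1) → Finset ℕ := Function.update P i1 ((P i1).erase a) with hU1
  have hP1 : IsPartition (T.erase a) (k+1) U1 := hP.remove hi1
  have hmv := hP1.move (i := i1) (j := i3) (Ne.symm hi3) (subset_refl (U1 i1))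
  refine compress hmv (i0 := i1) ?_ ?_
  · rw [Function.update_of_ne hi3.symm, Function.update_self, sdiff_self]
    rfl
  · intro i hii1
    rcases eq_or_ne i i3 with rfl | hii3
    · rw [Function.update_self]
      refine le_trans (hPx i) (le_trans ?_ (bundleVal_mono hv Finset.subset_union_left))
      rw [hU1, Function.update_of_ne hi3]
    · rw [Function.update_of_ne hii3, Function.update_of_ne hii1, hU1,
        Function.update_of_ne hii1]
      exact hPx i

lemma step_two {v : ℕ → ℝ} (hv : ∀ g, 0 ≤ v g) {x : ℝ} {k : ℕ} (hk : 1 ≤ k)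
    {T H : Finset ℕ} {a b : ℕ} (ha : a ∈ T) (hb : b ∈ T) (hab : a ≠ b)
    (hHT : H ⊆ T) (hHcard : H.card = k + 1) (haH : a ∈ H) (hbH : b ∉ H)
    (hHv : ∀ h ∈ H, v a ≤ v h) (hvba : v b ≤ v a)
    (h : Ach v T (k+1) x) : Ach v ((T.erase a).erase b) k x := by
  obtain ⟨P, hP, hPx⟩ := h
  obtain ⟨i1, hi1⟩ := hP.exists_mem ha
  obtain ⟨i2, hi2⟩ := hP.exists_mem hb
  rcases eq_or_ne i1 i2 with rfl | h12
  · -- a and b in the same bundle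
    have : Nontrivial (Fin (k+1)) := Fin.nontrivial_iff_two_le.mpr (by omega)
    obtain ⟨i3, hi3⟩ := exists_ne i1
    set U1 : Fin (k+1) → Finset ℕ := Function.update P i1 ((P i1).erase a) with hU1def
    have hP1 : IsPartition (T.erase a) (k+1) U1 := hP.remove hi1
    have hbU1 : b ∈ U1 i1 := by
      rw [hU1def, Function.update_self]
      exact Finset.mem_erase.mpr ⟨Ne.symm hab, hi2⟩
    have hP2 := hP1.remove hbU1
    set U2 : Fin (k+1) → Finset ℕ := Function.update U1 i1 ((U1 i1).erase b) with hU2def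
    have hmv := hP2.move (i := i1) (j := i3) (Ne.symm hi3) (subset_refl (U2 i1))
    refine compress hmv (i0 := i1) ?_ ?_
    · rw [Function.update_of_ne hi3.symm, Function.update_self, sdiff_self]
      rfl
    · intro i hii1
      rcases eq_or_ne i i3 with rfl | hii3
      · rw [Function.update_self]
        refine le_trans (hPx i) (le_trans ?_ (bundleVal_mono hv Finset.subset_union_left))
        rw [hU2def, Function.update_of_ne hi3, hU1def, Function.update_of_ne hi3]
      · rw [Function.update_of_ne hii3, Function.update_of_ne hii1, hU2def,
          Function.update_of_ne hii1, hU1def, Function.update_of_ne hii1]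
        exact hPx i
  · -- a and b in different bundles
    set U1 : Fin (k+1) → Finset ℕ := Function.update P i1 ((P i1).erase a) with hU1def
    have hP1 : IsPartition (T.erase a) (k+1) U1 := hP.remove hi1
    have hbU1 : b ∈ U1 i2 := by rw [hU1def, Function.update_of_ne (Ne.symm h12)]; exact hi2
    have hP2 := hP1.remove hbU1
    set U2 : Fin (k+1) → Finset ℕ := Function.update U1 i2 ((U1 i2).erase b) with hU2def
    have hU2i1 : U2 i1 = (P i1).erase a := by
      rw [hU2def, Function.update_of_ne h12, hU1def, Function.update_self]
    have hU2i2 : U2 i2 = (P i2).erase b := by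
      rw [hU2def, Function.update_self, hU1def, Function.update_of_ne (Ne.symm h12)]
    have hU2other : ∀ i, i ≠ i1 → i ≠ i2 → U2 i = P i := by
      intro i h1 h2
      rw [hU2def, Function.update_of_ne h2, hU1def, Function.update_of_ne h1]
    by_cases hc : (∃ h ∈ H, h ∈ P i2 ∧ h ≠ a) ∨ (∃ h ∈ H, h ∈ P i1 ∧ h ≠ a)
    · -- merge bundles i1 and i2
      have hmv := hP2.move (i := i1) (j := i2) h12 (subset_refl (U2 i1))
      refine compress hmv (i0 := i1) ?_ ?_
      · rw [Function.update_of_ne h12, Function.update_self, sdiff_self]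
        rfl
      · intro i hii1
        rcases eq_or_ne i i2 with rfl | hii2
        · rw [Function.update_self]
          have hdisj : Disjoint (U2 i) (U2 i1) := by
            rw [hU2i1, hU2i2]
            exact (hP.1 i i1 (Ne.symm h12)).mono (Finset.erase_subset _ _) (Finset.erase_subset _ _)
          rw [bundleVal_union hdisj, hU2i1, hU2i2]
          rcases hc with ⟨g, hgH, hgP, hga⟩ | ⟨g, hgH, hgP, hga⟩
          · have h1 : v g ≤ bundleVal v ((P i).erase b) :=
              single_le_bundleVal hv (Finset.mem_erase.mpr ⟨fun e => hbH (e ▸ hgH), hgP⟩)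
            have h2 : bundleVal v ((P i1).erase a) = bundleVal v (P i1) - v a :=
              bundleVal_erase hi1
            have h3 := hPx i1
            have h4 := hHv g hgH
            linarith
          · have h1 : v g ≤ bundleVal v ((P i1).erase a) :=
              single_le_bundleVal hv (Finset.mem_erase.mpr ⟨hga, hgP⟩)
            have h2 : bundleVal v ((P i).erase b) = bundleVal v (P i) - v b :=
              bundleVal_erase hi2
            have h3 := hPx i
            have h4 := hHv g hgH
            linarith
        · rw [Function.update_of_ne hii2, Function.update_of_ne hii1, hU2other i hii1 hii2]
          exact hPx i
    · -- pigeonhole: some other bundle has two goods of H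
      push_neg at hc
      obtain ⟨hc1, hc2⟩ := hc
      have hf0 : Nonempty (Fin (k+1)) := ⟨i1⟩
      set f : ℕ → Fin (k+1) :=
        fun g => if hg : g ∈ T then (hP.exists_mem hg).choose else i1 with hfdef
      have hf : ∀ g ∈ T, g ∈ P (f g) := by
        intro g hg
        rw [hfdef]
        simp only [dif_pos hg]
        exact (hP.exists_mem hg).choose_spec
      have hmaps : ∀ g ∈ H.erase a, f g ∈ (Finset.univ.erase i1).erase i2 := by
        intro g hg
        obtain ⟨hga, hgH⟩ := Finset.mem_erase.mp hg
        have hgP := hf g (hHT hgH)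
        refine Finset.mem_erase.mpr ⟨?_, Finset.mem_erase.mpr ⟨?_, Finset.mem_univ _⟩⟩
        · intro hfg; rw [hfg] at hgP; exact hga (hc1 g hgH hgP)
        · intro hfg; rw [hfg] at hgP; exact hga (hc2 g hgH hgP)
      have hcard : ((Finset.univ.erase i1).erase i2).card < (H.erase a).card := by
        rw [Finset.card_erase_of_mem haH, hHcard,
          Finset.card_erase_of_mem (Finset.mem_erase.mpr ⟨Ne.symm h12, Finset.mem_univ _⟩),
          Finset.card_erase_of_mem (Finset.mem_univ _), Finset.card_univ, Fintype.card_fin]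
        omega
      obtain ⟨g, hg, g', hg', hgg', hfeq⟩ :=
        Finset.exists_ne_map_eq_of_card_lt_of_maps_to hcard hmaps
      have hi3mem := hmaps g hg
      obtain ⟨hi3ne2, hrest⟩ := Finset.mem_erase.mp hi3mem
      obtain ⟨hi3ne1, -⟩ := Finset.mem_erase.mp hrest
      obtain ⟨hga, hgH⟩ := Finset.mem_erase.mp hg
      obtain ⟨hg'a, hg'H⟩ := Finset.mem_erase.mp hg'
      set i3 := f g with hi3def
      have hgP3 : g ∈ P i3 := hf g (hHT hgH)
      have hg'P3 : g' ∈ P i3 := by rw [hfeq]; exact hf g' (hHT hg'H)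
      have hgU2 : g ∈ U2 i3 := by rw [hU2other i3 hi3ne1 hi3ne2]; exact hgP3
      have hmv1 := hP2.move (i := i3) (j := i1) hi3ne1 (Finset.singleton_subset_iff.mpr hgU2)
      set U3 : Fin (k+1) → Finset ℕ :=
        Function.update (Function.update U2 i3 (U2 i3 \ {g})) i1 (U2 i1 ∪ {g}) with hU3def
      have hU3i3 : U3 i3 = U2 i3 \ {g} := by
        rw [hU3def, Function.update_of_ne hi3ne1, Function.update_self]
      have hU3i1 : U3 i1 = U2 i1 ∪ {g} := by rw [hU3def, Function.update_self]
      have hU3i2 : U3 i2 = U2 i2 := by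
        rw [hU3def, Function.update_of_ne (Ne.symm h12), Function.update_of_ne (Ne.symm hi3ne2)]
      have hU3other : ∀ i, i ≠ i1 → i ≠ i2 → i ≠ i3 → U3 i = P i := by
        intro i h1 h2 h3
        rw [hU3def, Function.update_of_ne h1, Function.update_of_ne h3, hU2other i h1 h2]
      have hmv2 := hmv1.move (i := i3) (j := i2) hi3ne2 (subset_refl (U3 i3))
      refine compress hmv2 (i0 := i3) ?_ ?_
      · rw [Function.update_of_ne hi3ne2, Function.update_self, sdiff_self]
        rfl
      · intro i hii3
        rcases eq_or_ne i i2 with rfl | hii2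
        · rw [Function.update_self]
          have e2 : U3 i = (P i).erase b := by rw [hU3i2, hU2i2]
          have e3 : U3 i3 = P i3 \ {g} := by rw [hU3i3, hU2other i3 hi3ne1 hi3ne2]
          have hdisj23 : Disjoint (U3 i) (U3 i3) := by
            rw [e2, e3]
            exact (hP.1 i i3 (Ne.symm hi3ne2)).mono (Finset.erase_subset _ _) sdiff_subset
          rw [bundleVal_union hdisj23, e2, e3]
          have h1 : bundleVal v ((P i).erase b) = bundleVal v (P i) - v b := bundleVal_erase hi2
          have h2 : v g' ≤ bundleVal v (P i3 \ {g}) :=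
            single_le_bundleVal hv
              (Finset.mem_sdiff.mpr ⟨hg'P3, Finset.notMem_singleton.mpr (Ne.symm hgg')⟩)
          have h3 := hPx i
          have h4 := hHv g' hg'H
          linarith
        · rcases eq_or_ne i i1 with rfl | hii1
          · rw [Function.update_of_ne hii2, Function.update_of_ne hii3, hU3i1, hU2i1]
            have hganotin : g ∉ (P i).erase a := fun hmem =>
              Finset.disjoint_left.mp (hP.1 i3 i hii3.symm) hgP3 (Finset.erase_subset _ _ hmem)
            rw [bundleVal_union (Finset.disjoint_singleton_right.mpr hganotin),
              bundleVal_erase hi1]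
            have h5 : bundleVal v {g} = v g := by simp [bundleVal]
            rw [h5]
            have h3 := hPx i
            have h4 := hHv g hgH
            linarith
          · rw [Function.update_of_ne hii2, Function.update_of_ne hii3,
              hU3other i hii1 hii2 hii3]
            exact hPx i

lemma down (n m : ℕ) (hn : 0 < n) (hm : 2 * n ≤ m)
    (v : ℕ → ℝ) (hv : ∀ g, 0 ≤ v g) (hord : ∀ a b : ℕ, a ≤ b → v b ≤ v a) (x : ℝ) :
    ∀ j k : ℕ, n ≤ k → k + j = (3 * n + 1) / 2 →
      Ach v (Finset.Icc 1 m) ((3 * n + 1) / 2) x →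
      Ach v (Finset.Icc 1 m \ Finset.Icc (k + 1) (3 * n - k)) k x := by
  intro j
  induction j with
  | zero =>
    intro k hnk hkd hx
    have hk : k = (3 * n + 1) / 2 := by omega
    have hd2 : 2 * k ≥ 3 * n := by omega
    have hempty : Finset.Icc (k + 1) (3 * n - k) = ∅ := Finset.Icc_eq_empty (by omega)
    rw [hempty, Finset.sdiff_empty, hk]
    exact hx
  | succ j ih =>
    intro k hnk hkd hx
    have hk1 : Ach v (Finset.Icc 1 m \ Finset.Icc (k + 1 + 1) (3 * n - (k + 1))) (k + 1) x :=
      ih (k + 1) (by omega) (by omega) hx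
    have hklt : 2 * (k + j + 1) ≤ 3 * n + 1 := by
      have := Nat.div_mul_le_self (3 * n + 1) 2
      omega
    have hk3n : 2 * k + 1 ≤ 3 * n := by omega
    have hkm : k + 1 ≤ m := by omega
    have h3nkm : 3 * n - k ≤ m := by omega
    set T := Finset.Icc 1 m \ Finset.Icc (k + 1 + 1) (3 * n - (k + 1)) with hTdef
    have haT : k + 1 ∈ T := by
      rw [hTdef]; simp only [Finset.mem_sdiff, Finset.mem_Icc]; omega
    rcases eq_or_lt_of_le (show k + 1 ≤ 3 * n - k by omega) with heq | hlt
    · -- single good removed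
      have hres := step_single hv (by omega : 1 ≤ k) haT hk1
      have hset : T.erase (k + 1) = Finset.Icc 1 m \ Finset.Icc (k + 1) (3 * n - k) := by
        rw [hTdef]
        ext t
        simp only [Finset.mem_erase, Finset.mem_sdiff, Finset.mem_Icc]
        omega
      rwa [hset] at hres
    · -- two goods removed
      have hbT : 3 * n - k ∈ T := by
        rw [hTdef]; simp only [Finset.mem_sdiff, Finset.mem_Icc]; omega
      have hres := step_two hv (by omega : 1 ≤ k) haT hbT (by omega : k + 1 ≠ 3 * n - k)
        (show Finset.Icc 1 (k + 1) ⊆ T by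
          intro t ht
          rw [hTdef]
          simp only [Finset.mem_Icc] at ht
          simp only [Finset.mem_sdiff, Finset.mem_Icc]
          omega)
        (by rw [Nat.card_Icc]; omega)
        (by simp only [Finset.mem_Icc]; omega)
        (by simp only [Finset.mem_Icc]; omega)
        (fun h hh => hord h (k + 1) (by simp only [Finset.mem_Icc] at hh; omega))
        (hord (k + 1) (3 * n - k) (by omega))
        hk1
      have hset : (T.erase (k + 1)).erase (3 * n - k) =
          Finset.Icc 1 m \ Finset.Icc (k + 1) (3 * n - k) := by
        rw [hTdef]
        ext t
        simp only [Finset.mem_erase, Finset.mem_sdiff, Finset.mem_Icc]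
        omega
      rwa [hset] at hres


/-- reduction lemma for ordered instances with μ^{⌈3n/2⌉} = 1. -/
theorem mms_reduction (n m : ℕ) (hn : 0 < n) (hm : 2 * n ≤ m)
    (v : ℕ → ℝ) (hv : ∀ g, 0 ≤ v g)
    (hord : ∀ a b : ℕ, a ≤ b → v b ≤ v a)
    (hmms : mms v (Finset.Icc 1 m) ((3 * n + 1) / 2) = 1) :
    ∀ k : ℕ, n ≤ k → k ≤ (3 * n + 1) / 2 →
      1 ≤ mms v (Finset.Icc 1 m \ Finset.Icc (k + 1) (3 * n - k)) k := by
  intro k hnk hkd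
  have hk0 : 0 < k := lt_of_lt_of_le hn hnk
  -- the trivial partition shows the sSup set for M is nonempty
  have hd0 : 0 < (3 * n + 1) / 2 := by omega
  have hach0 : Ach v (Finset.Icc 1 m) ((3 * n + 1) / 2) 0 := by
    refine ⟨fun i => if i = ⟨0, hd0⟩ then Finset.Icc 1 m else ∅, ⟨?_, ?_⟩, ?_⟩
    · intro i j hij
      dsimp only
      rcases eq_or_ne i ⟨0, hd0⟩ with rfl | hi
      · rw [if_pos rfl, if_neg (by rintro rfl; exact hij rfl)]
        exact Finset.disjoint_empty_right _
      · rw [if_neg hi]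
        exact Finset.disjoint_empty_left _
    · ext t
      simp only [Finset.mem_biUnion, Finset.mem_univ, true_and]
      constructor
      · rintro ⟨i, hi⟩
        split_ifs at hi with h
        · exact hi
        · exact absurd hi (Finset.notMem_empty t)
      · intro ht
        exact ⟨⟨0, hd0⟩, by rw [if_pos rfl]; exact ht⟩
    · intro i
      dsimp only [bundleVal]
      split_ifs
      · exact Finset.sum_nonneg fun g _ => hv g
      · simp [bundleVal]
  have hsub : {y : ℝ | Ach v (Finset.Icc 1 m) ((3 * n + 1) / 2) y} ⊆
      {y : ℝ | Ach v (Finset.Icc 1 m \ Finset.Icc (k + 1) (3 * n - k)) k y} := by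
    intro y hy
    exact down n m hn hm v hv hord y ((3 * n + 1) / 2 - k) k hnk (by omega) hy
  have hbdd : BddAbove {y : ℝ | Ach v (Finset.Icc 1 m \ Finset.Icc (k + 1) (3 * n - k)) k y} := by
    refine ⟨bundleVal v (Finset.Icc 1 m), ?_⟩
    rintro y ⟨P, hP, hPy⟩
    refine le_trans (hPy ⟨0, hk0⟩) (bundleVal_mono hv ?_)
    have h1 : P ⟨0, hk0⟩ ⊆ Finset.Icc 1 m \ Finset.Icc (k + 1) (3 * n - k) := by
      rw [← hP.2]
      exact Finset.subset_biUnion_of_mem P (Finset.mem_univ _)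
    exact subset_trans h1 Finset.sdiff_subset
  have hne : Set.Nonempty {y : ℝ | Ach v (Finset.Icc 1 m) ((3 * n + 1) / 2) y} := ⟨0, hach0⟩
  have key := csSup_le_csSup hbdd hne hsub
  rw [mms_eq_sSup] at hmms
  rw [mms_eq_sSup]
  rw [hmms] at key
  exact key
end

section
/- In a bipartite threshold graph T between a set of bundles and a set of agents (edge between agent i and bundle B_j iff v_i(B_j) ≥ t_i), if every bundle has at least one incident edge, then T contains a nonempty envy-free matching: a matching such that no unmatched agent has an edge to any matched bundle. -/
open Finset

/-- existence of a nonempty envy-free matching in a threshold graph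
in which every bundle has at least one incident edge. -/
theorem envy_free_matching_exists (k : ℕ) (hk : 0 < k)
    (B : Fin k → Finset ℕ) (v : Fin k → ℕ → ℝ) (t : Fin k → ℝ)
    (hedge : ∀ j : Fin k, ∃ i : Fin k, t i ≤ bundleVal (v i) (B j)) :
    ∃ Mch : Finset (Fin k × Fin k), Mch.Nonempty ∧
      (∀ p ∈ Mch, t p.1 ≤ bundleVal (v p.1) (B p.2)) ∧
      (∀ p ∈ Mch, ∀ q ∈ Mch, p ≠ q → p.1 ≠ q.1 ∧ p.2 ≠ q.2) ∧
      (∀ i : Fin k, (∀ p ∈ Mch, p.1 ≠ i) →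
        ∀ p ∈ Mch, bundleVal (v i) (B p.2) < t i) := by
  classical
  haveI : Nonempty (Fin k) := ⟨⟨0, hk⟩⟩
  -- neighborhood of a set of bundles
  set N : Finset (Fin k) → Finset (Fin k) :=
    fun Y => univ.filter (fun i => ∃ j ∈ Y, t i ≤ bundleVal (v i) (B j)) with hN
  have hNmono : ∀ Y X : Finset (Fin k), Y ⊆ X → N Y ⊆ N X := by
    intro Y X hYX i hi
    simp only [hN, mem_filter, mem_univ, true_and] at hi ⊢
    obtain ⟨j, hj, hle⟩ := hi
    exact ⟨j, hYX hj, hle⟩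
  -- the family of nonempty "Hall-deficient-or-tight" sets
  set 𝒮 : Finset (Finset (Fin k)) :=
    univ.powerset.filter (fun X => X.Nonempty ∧ (N X).card ≤ X.card) with h𝒮
  have huniv : (univ : Finset (Fin k)) ∈ 𝒮 := by
    simp only [h𝒮, mem_filter, mem_powerset]
    exact ⟨subset_rfl, univ_nonempty, card_le_card (filter_subset _ _)⟩
  obtain ⟨X, hXmem, hXmin⟩ := Finset.exists_min_image 𝒮 Finset.card ⟨univ, huniv⟩
  have hXprop := hXmem
  simp only [h𝒮, mem_filter, mem_powerset] at hXprop
  obtain ⟨-, hXne, hXcard⟩ := hXprop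
  -- minimality: every nonempty proper subset Y of X has |Y| < |N Y|
  have hstrict : ∀ Y : Finset (Fin k), Y ⊆ X → Y.Nonempty → Y ≠ X → Y.card < (N Y).card := by
    intro Y hYX hYne hYX'
    by_contra h
    push_neg at h
    have hYmem : Y ∈ 𝒮 := by
      simp only [h𝒮, mem_filter, mem_powerset]
      exact ⟨subset_univ _, hYne, h⟩
    have h1 := hXmin Y hYmem
    have h2 : Y.card < X.card := card_lt_card (lt_of_le_of_ne hYX hYX')
    omega
  -- |N X| = |X|
  have hNXcard : (N X).card = X.card := by
    obtain ⟨x, hx⟩ := hXne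
    by_cases he : (X.erase x).Nonempty
    · have h1 := hstrict (X.erase x) (erase_subset _ _) he (by
        intro h
        have := h ▸ (Finset.notMem_erase x X)
        exact this hx)
      have h2 : (N (X.erase x)).card ≤ (N X).card :=
        card_le_card (hNmono _ _ (erase_subset _ _))
      have h3 : (X.erase x).card = X.card - 1 := card_erase_of_mem hx
      have h4 : 1 ≤ X.card := card_pos.mpr ⟨x, hx⟩
      omega
    · -- X = {x}
      have hX1 : X = {x} := by
        apply eq_singleton_iff_unique_mem.mpr
        refine ⟨hx, fun y hy => ?_⟩
        by_contra hne
        exact he ⟨y, mem_erase.mpr ⟨hne, hy⟩⟩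
      obtain ⟨i, hi⟩ := hedge x
      have hiN : i ∈ N X := by
        simp only [hN, mem_filter, mem_univ, true_and]
        exact ⟨x, hx, hi⟩
      have : 1 ≤ (N X).card := card_pos.mpr ⟨i, hiN⟩
      have : X.card = 1 := by rw [hX1]; simp
      omega
  -- Hall's condition for the graph restricted to bundles in X
  set r : {j // j ∈ X} → Finset (Fin k) :=
    fun j => univ.filter (fun i => t i ≤ bundleVal (v i) (B j.1)) with hr
  have hbiUnion : ∀ S : Finset {j // j ∈ X}, S.biUnion r = N (S.image Subtype.val) := by
    intro S
    ext i
    simp only [hr, hN, mem_biUnion, mem_filter, mem_univ, true_and, mem_image]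
    constructor
    · rintro ⟨j, hj, hle⟩
      exact ⟨j.1, ⟨j, hj, rfl⟩, hle⟩
    · rintro ⟨j, ⟨j', hj', rfl⟩, hle⟩
      exact ⟨j', hj', hle⟩
  have hHall : ∀ S : Finset {j // j ∈ X}, S.card ≤ (S.biUnion r).card := by
    intro S
    rcases S.eq_empty_or_nonempty with hS | hS
    · simp [hS]
    · rw [hbiUnion]
      set Y := S.image Subtype.val with hY
      have hScard : S.card = Y.card :=
        (card_image_of_injective S Subtype.val_injective).symm
      have hYX : Y ⊆ X := by
        intro y hy
        simp only [hY, mem_image] at hy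
        obtain ⟨j, _, rfl⟩ := hy
        exact j.2
      have hYne : Y.Nonempty := hS.image _
      by_cases hYeq : Y = X
      · rw [hScard, hYeq, hNXcard]
      · exact (hScard ▸ (hstrict Y hYX hYne hYeq)).le
  obtain ⟨f, hfinj, hfmem⟩ :=
    (Finset.all_card_le_biUnion_card_iff_exists_injective r).mp hHall
  have hfadj : ∀ j : {x // x ∈ X}, t (f j) ≤ bundleVal (v (f j)) (B j.1) := by
    intro j
    have := hfmem j
    simp only [hr, mem_filter, mem_univ, true_and] at this
    exact this
  -- the matching
  refine ⟨X.attach.image (fun j => (f j, j.1)), ?_, ?_, ?_, ?_⟩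
  · obtain ⟨x, hx⟩ := hXne
    exact ⟨(f ⟨x, hx⟩, x), mem_image.mpr ⟨⟨x, hx⟩, mem_attach _ _, rfl⟩⟩
  · rintro p hp
    obtain ⟨j, _, rfl⟩ := mem_image.mp hp
    exact hfadj j
  · rintro p hp q hq hpq
    obtain ⟨j, _, rfl⟩ := mem_image.mp hp
    obtain ⟨j', _, rfl⟩ := mem_image.mp hq
    have hjj' : j ≠ j' := by
      rintro rfl; exact hpq rfl
    constructor
    · intro h
      exact hjj' (hfinj h)
    · intro h
      exact hjj' (Subtype.ext h)
  · intro i hi p hp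
    obtain ⟨j, _, rfl⟩ := mem_image.mp hp
    -- i is not in the image of f; but image of f = N X
    have himg : X.attach.image f = N X := by
      apply eq_of_subset_of_card_le
      · intro a ha
        obtain ⟨j', _, rfl⟩ := mem_image.mp ha
        simp only [hN, mem_filter, mem_univ, true_and]
        exact ⟨j'.1, j'.2, hfadj j'⟩
      · rw [hNXcard, card_image_of_injective _ hfinj, card_attach]
    have hiNX : i ∉ N X := by
      rw [← himg]
      intro hmem
      obtain ⟨j', hj', hfj'⟩ := mem_image.mp hmem
      exact hi (f j', j'.1) (mem_image.mpr ⟨j', mem_attach _ _, rfl⟩) hfj'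
    simp only [hN, mem_filter, mem_univ, true_and, not_exists] at hiNX
    have h := hiNX j.1
    push_neg at h
    exact h j.2
end

section
/- Envy-cycle elimination preserves EF1 and weakly increases utilities: given agents with additive valuations and a partial allocation A that is EF1, there exists a complete allocation A' (allocating all goods) that is EF1 and satisfies v_i(A'_i) ≥ v_i(A_i) for every agent i. -/
open Finset

/-- An allocation is EF1. -/
def EF1 (n : ℕ) (v : Fin n → ℕ → ℝ) (A : Fin n → Finset ℕ) : Prop :=
  ∀ i j : Fin n, i ≠ j →
    bundleVal (v i) (A j) ≤ bundleVal (v i) (A i) ∨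
      ∃ g ∈ A j, bundleVal (v i) ((A j).erase g) ≤ bundleVal (v i) (A i)

/-- EF1 is preserved by a pointwise-improving permutation of the bundles. -/
lemma ef1_of_perm {n : ℕ} {v : Fin n → ℕ → ℝ} {B : Fin n → Finset ℕ}
    (hEF1 : EF1 n v B) (π : Equiv.Perm (Fin n))
    (himp : ∀ i, bundleVal (v i) (B i) ≤ bundleVal (v i) (B (π i))) :
    EF1 n v (fun i => B (π i)) := by
  intro i j hij
  simp only []
  by_cases h : π j = i
  · left
    calc bundleVal (v i) (B (π j)) = bundleVal (v i) (B i) := by rw [h]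
      _ ≤ bundleVal (v i) (B (π i)) := himp i
  · rcases hEF1 i (π j) (fun he => h he.symm) with h1 | ⟨g, hg, h2⟩
    · exact Or.inl (h1.trans (himp i))
    · exact Or.inr ⟨g, hg, h2.trans (himp i)⟩

/-- Selection lemma: some pointwise-improving permutation of the bundles has an
unenvied agent. -/
lemma exists_perm_unenvied {n : ℕ} (hn : 0 < n) (v : Fin n → ℕ → ℝ)
    (B : Fin n → Finset ℕ) :
    ∃ π : Equiv.Perm (Fin n),
      (∀ i, bundleVal (v i) (B i) ≤ bundleVal (v i) (B (π i))) ∧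
      ∃ i0 : Fin n, ∀ j, bundleVal (v j) (B (π i0)) ≤ bundleVal (v j) (B (π j)) := by
  classical
  set T : Finset (Equiv.Perm (Fin n)) :=
    Finset.univ.filter (fun π => ∀ i, bundleVal (v i) (B i) ≤ bundleVal (v i) (B (π i)))
    with hT
  have hTne : T.Nonempty := ⟨1, by simp [hT]⟩
  obtain ⟨π, hπT, hπmax⟩ :=
    T.exists_max_image (fun π => ∑ i, bundleVal (v i) (B (π i))) hTne
  have hπ : ∀ i, bundleVal (v i) (B i) ≤ bundleVal (v i) (B (π i)) := by
    have := (Finset.mem_filter.mp hπT).2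
    exact this
  refine ⟨π, hπ, ?_⟩
  by_contra hcon
  push_neg at hcon
  -- every agent is envied: choose an envier e i of each i
  choose e he using hcon
  set z : Fin n := ⟨0, hn⟩ with hz
  -- find a cycle of e
  obtain ⟨a, b, hab, heq⟩ :=
    Fintype.exists_ne_map_eq_of_card_lt (fun k : Fin (n + 1) => e^[(k : ℕ)] z)
      (by simp)
  have hcyc : ∃ p q : ℕ, p < q ∧ e^[p] z = e^[q] z := by
    rcases hab.lt_or_gt with h | h
    · exact ⟨a.1, b.1, Fin.lt_def.mp h, heq⟩
    · exact ⟨b.1, a.1, Fin.lt_def.mp h, heq.symm⟩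
  obtain ⟨p, q, hpq, hpeq⟩ := hcyc
  set x : Fin n := e^[p] z with hx
  have hper0 : e^[q - p] x = x := by
    rw [hx, ← Function.iterate_add_apply]
    rw [Nat.sub_add_cancel hpq.le]
    exact hpeq.symm
  -- minimal period
  have hP : ∃ m, 0 < m ∧ e^[m] x = x := ⟨q - p, Nat.sub_pos_of_lt hpq, hper0⟩
  set m : ℕ := Nat.find hP with hm
  obtain ⟨hmpos, hmper⟩ : 0 < m ∧ e^[m] x = x := Nat.find_spec hP
  have hdist : ∀ i j : ℕ, i < j → j < m → e^[i] x ≠ e^[j] x := by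
    intro i j hij hjm habs
    have h1 : e^[m - j + i] x = x := by
      rw [Function.iterate_add_apply, habs, ← Function.iterate_add_apply,
        Nat.sub_add_cancel hjm.le, hmper]
    have h2 : 0 < m - j + i := Nat.add_pos_left (Nat.sub_pos_of_lt hjm) i
    have h3 : m - j + i < m := by omega
    exact Nat.find_min hP h3 ⟨h2, h1⟩
  -- injectivity of iterates up to m (for positive exponents ≤ m)
  have hinj2 : ∀ k1 k2 : ℕ, 0 < k1 → 0 < k2 → k1 ≤ m → k2 ≤ m →
      e^[k1] x = e^[k2] x → k1 = k2 := by
    intro k1 k2 h1 h2 h1m h2m heqk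
    by_contra hne
    rcases Nat.lt_or_ge k1 k2 with hlt | hge
    · rcases Nat.lt_or_ge k2 m with h2m' | h2m'
      · exact hdist k1 k2 hlt h2m' heqk
      · have : k2 = m := le_antisymm h2m h2m'
        subst this
        exact hdist 0 k1 h1 (lt_of_lt_of_le hlt (le_of_eq rfl))
          (by rw [Function.iterate_zero_apply, heqk, hmper])
    · have hlt : k2 < k1 := lt_of_le_of_ne hge (fun h => hne h.symm)
      rcases Nat.lt_or_ge k1 m with h1m' | h1m'
      · exact hdist k2 k1 hlt h1m' heqk.symm
      · have : k1 = m := le_antisymm h1m h1m'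
        subst this
        exact hdist 0 k2 h2 hlt
          (by rw [Function.iterate_zero_apply, ← heqk, hmper])
  -- the orbit
  set O : Finset (Fin n) := (Finset.range m).image (fun k => e^[k] x) with hO
  have hxO : x ∈ O := by
    rw [hO]
    exact Finset.mem_image.mpr ⟨0, Finset.mem_range.mpr hmpos, rfl⟩
  have heO : ∀ i ∈ O, e i ∈ O := by
    intro i hi
    obtain ⟨k, hk, rfl⟩ := Finset.mem_image.mp hi
    rw [Finset.mem_range] at hk
    rcases Nat.lt_or_ge (k + 1) m with h | h
    · refine Finset.mem_image.mpr ⟨k + 1, Finset.mem_range.mpr h, ?_⟩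
      rw [Function.iterate_succ_apply']
    · have hk1 : k + 1 = m := le_antisymm hk h
      have h1 : e^[k+1] x = x := by rw [hk1]; exact hmper
      rw [Function.iterate_succ_apply'] at h1
      rw [h1]; exact hxO
  set gg : Fin n → Fin n := fun i => if i ∈ O then e i else i with hgg
  have hggO : ∀ i ∈ O, gg i ∈ O := by
    intro i hi; rw [hgg]; simp only [if_pos hi]; exact heO i hi
  have hinj : Function.Injective gg := by
    intro i j hij
    by_cases hi : i ∈ O <;> by_cases hj : j ∈ O
    · obtain ⟨k1, hk1, rfl⟩ := Finset.mem_image.mp hi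
      obtain ⟨k2, hk2, rfl⟩ := Finset.mem_image.mp hj
      rw [Finset.mem_range] at hk1 hk2
      rw [hgg] at hij
      simp only [if_pos hi, if_pos hj] at hij
      have h12 : e^[k1+1] x = e^[k2+1] x := by
        rw [Function.iterate_succ_apply', Function.iterate_succ_apply']
        exact hij
      have hkk := hinj2 (k1+1) (k2+1) (Nat.succ_pos _) (Nat.succ_pos _) hk1 hk2 h12
      have : k1 = k2 := by omega
      rw [this]
    · exfalso
      have h1 : gg i ∈ O := hggO i hi
      have h2 : gg j = j := by rw [hgg]; simp [hj]
      rw [hij, h2] at h1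
      exact hj h1
    · exfalso
      have h1 : gg j ∈ O := hggO j hj
      have h2 : gg i = i := by rw [hgg]; simp [hi]
      rw [← hij, h2] at h1
      exact hi h1
    · have h2 : gg i = i := by rw [hgg]; simp [hi]
      have h3 : gg j = j := by rw [hgg]; simp [hj]
      rw [← h2, ← h3, hij]
  -- the rotating permutation
  set ρ0 : Equiv.Perm (Fin n) := Equiv.ofBijective gg (Finite.injective_iff_bijective.mp hinj)
    with hρ0
  set ρ : Equiv.Perm (Fin n) := ρ0.symm with hρ
  have hρ0ap : ∀ i, ρ0 i = gg i := fun i => rfl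
  have hggρ : ∀ i, gg (ρ i) = i := fun i => ρ0.apply_symm_apply i
  have hρout : ∀ i ∉ O, ρ i = i := by
    intro i hi
    have h1 : ρ0 i = i := by rw [hρ0ap, hgg]; simp [hi]
    have h2 := congrArg ρ0.symm h1
    rw [Equiv.symm_apply_apply] at h2
    exact h2.symm
  have hρin : ∀ i ∈ O, ρ i ∈ O ∧ e (ρ i) = i := by
    intro i hi
    have hji : gg (ρ i) = i := hggρ i
    by_cases hjO : ρ i ∈ O
    · refine ⟨hjO, ?_⟩
      rw [hgg] at hji
      simpa only [if_pos hjO] using hji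
    · exfalso
      rw [hgg] at hji
      simp only [if_neg hjO] at hji
      rw [hji] at hjO
      exact hjO hi
  -- pointwise improvement of the rotation
  have hkey : ∀ i, bundleVal (v i) (B (π i)) ≤ bundleVal (v i) (B (π (ρ i))) := by
    intro i
    by_cases hi : i ∈ O
    · obtain ⟨_, hei⟩ := hρin i hi
      have h3 := he (ρ i)
      rw [hei] at h3
      exact h3.le
    · rw [hρout i hi]
  have hstrict : bundleVal (v x) (B (π x)) < bundleVal (v x) (B (π (ρ x))) := by
    obtain ⟨_, hei⟩ := hρin x hxO
    have h3 := he (ρ x)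
    rwa [hei] at h3
  -- the improved permutation contradicts maximality
  set π' : Equiv.Perm (Fin n) := ρ.trans π with hπ'
  have hπ'ap : ∀ i, π' i = π (ρ i) := fun i => rfl
  have hπ'T : π' ∈ T := by
    rw [hT, Finset.mem_filter]
    refine ⟨Finset.mem_univ _, fun i => ?_⟩
    rw [hπ'ap]
    exact (hπ i).trans (hkey i)
  have hlt : (∑ i, bundleVal (v i) (B (π i))) < ∑ i, bundleVal (v i) (B (π' i)) := by
    refine Finset.sum_lt_sum (fun i _ => by rw [hπ'ap]; exact hkey i) ?_
    exact ⟨x, Finset.mem_univ x, by rw [hπ'ap]; exact hstrict⟩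
  exact absurd (hπmax π' hπ'T) (not_le.mpr hlt)

/-- One step of envy-cycle elimination: allocate one more good. -/
lemma envy_cycle_step {n : ℕ} (hn : 0 < n) {M : Finset ℕ} {v : Fin n → ℕ → ℝ}
    (hv : ∀ i g, 0 ≤ v i g) {B : Fin n → Finset ℕ}
    (hdisj : ∀ i j : Fin n, i ≠ j → Disjoint (B i) (B j))
    (hsub : ∀ i, B i ⊆ M) (hEF1 : EF1 n v B)
    {g : ℕ} (hgM : g ∈ M) (hgB : g ∉ Finset.univ.biUnion B) :
    ∃ C : Fin n → Finset ℕ,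
      (∀ i j : Fin n, i ≠ j → Disjoint (C i) (C j)) ∧
      (∀ i, C i ⊆ M) ∧ EF1 n v C ∧
      (∀ i, bundleVal (v i) (B i) ≤ bundleVal (v i) (C i)) ∧
      Finset.univ.biUnion C = insert g (Finset.univ.biUnion B) := by
  classical
  obtain ⟨π, hπ, i0, hi0⟩ := exists_perm_unenvied hn v B
  set C0 : Fin n → Finset ℕ := fun i => B (π i) with hC0
  have hC0EF1 : EF1 n v C0 := ef1_of_perm hEF1 π hπ
  have hgC0 : ∀ i, g ∉ C0 i := by
    intro i hgi
    exact hgB (Finset.mem_biUnion.mpr ⟨π i, Finset.mem_univ _, hgi⟩)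
  have hC0biU : Finset.univ.biUnion C0 = Finset.univ.biUnion B := by
    ext a
    simp only [Finset.mem_biUnion, Finset.mem_univ, true_and, hC0]
    constructor
    · rintro ⟨i, hi⟩; exact ⟨π i, hi⟩
    · rintro ⟨i, hi⟩; exact ⟨π.symm i, by rwa [Equiv.apply_symm_apply]⟩
  set C : Fin n → Finset ℕ := Function.update C0 i0 (insert g (C0 i0)) with hC
  have hCi0 : C i0 = insert g (C0 i0) := Function.update_self _ _ _
  have hCne : ∀ i, i ≠ i0 → C i = C0 i := fun i hi => Function.update_of_ne hi _ _
  have hsubC0 : ∀ i, C0 i ⊆ M := fun i => hsub (π i)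
  have hmono : ∀ i, bundleVal (v i) (C0 i) ≤ bundleVal (v i) (C i) := by
    intro i
    by_cases hi : i = i0
    · subst hi
      rw [hCi0]
      exact bundleVal_mono (hv i) (Finset.subset_insert _ _)
    · rw [hCne i hi]
  refine ⟨C, ?_, ?_, ?_, ?_, ?_⟩
  · -- disjointness
    intro i j hij
    have hd0 : ∀ i j : Fin n, i ≠ j → Disjoint (C0 i) (C0 j) := by
      intro i j hij
      exact hdisj (π i) (π j) (fun h => hij (π.injective h))
    by_cases hi : i = i0
    · subst hi
      rw [hCi0, hCne j (Ne.symm hij), Finset.disjoint_insert_left]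
      exact ⟨hgC0 j, hd0 _ _ hij⟩
    · by_cases hj : j = i0
      · subst hj
        rw [hCi0, hCne i hi, Finset.disjoint_insert_right]
        exact ⟨hgC0 i, hd0 _ _ hij⟩
      · rw [hCne i hi, hCne j hj]
        exact hd0 _ _ hij
  · -- subset of M
    intro i
    by_cases hi : i = i0
    · subst hi
      rw [hCi0]
      exact Finset.insert_subset hgM (hsubC0 _)
    · rw [hCne i hi]; exact hsubC0 i
  · -- EF1
    intro i j hij
    by_cases hj : j = i0
    · subst hj
      right
      refine ⟨g, by rw [hCi0]; exact Finset.mem_insert_self _ _, ?_⟩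
      rw [hCi0, Finset.erase_insert (hgC0 _)]
      exact (hi0 i).trans (hmono i)
    · rw [hCne j hj]
      rcases hC0EF1 i j hij with h1 | ⟨g', hg', h2⟩
      · exact Or.inl (h1.trans (hmono i))
      · exact Or.inr ⟨g', hg', h2.trans (hmono i)⟩
  · -- pointwise improvement
    intro i
    exact (hπ i).trans (hmono i)
  · -- biUnion
    rw [← hC0biU]
    ext a
    simp only [Finset.mem_biUnion, Finset.mem_univ, true_and, Finset.mem_insert]
    constructor
    · rintro ⟨i, hi⟩
      by_cases h : i = i0
      · subst h
        rw [hCi0, Finset.mem_insert] at hi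
        rcases hi with h | h
        · exact Or.inl h
        · exact Or.inr ⟨_, h⟩
      · rw [hCne i h] at hi
        exact Or.inr ⟨i, hi⟩
    · rintro (rfl | ⟨i, hi⟩)
      · exact ⟨i0, by rw [hCi0]; exact Finset.mem_insert_self _ _⟩
      · by_cases h : i = i0
        · subst h
          exact ⟨i, by rw [hCi0]; exact Finset.mem_insert_of_mem hi⟩
        · exact ⟨i, by rw [hCne i h]; exact hi⟩

lemma envy_cycle_aux {n : ℕ} (hn : 0 < n) {M : Finset ℕ} {v : Fin n → ℕ → ℝ}
    (hv : ∀ i g, 0 ≤ v i g) :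
    ∀ k : ℕ, ∀ A : Fin n → Finset ℕ,
      (M \ Finset.univ.biUnion A).card ≤ k →
      (∀ i j : Fin n, i ≠ j → Disjoint (A i) (A j)) →
      (∀ i, A i ⊆ M) → EF1 n v A →
      ∃ A' : Fin n → Finset ℕ,
        (∀ i j : Fin n, i ≠ j → Disjoint (A' i) (A' j)) ∧
        Finset.univ.biUnion A' = M ∧
        EF1 n v A' ∧
        ∀ i, bundleVal (v i) (A i) ≤ bundleVal (v i) (A' i) := by
  intro k
  induction k with
  | zero =>
    intro A hcard hdisj hsub hEF1
    refine ⟨A, hdisj, ?_, hEF1, fun i => le_refl _⟩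
    have h1 : M \ Finset.univ.biUnion A = ∅ := Finset.card_eq_zero.mp (Nat.le_zero.mp hcard)
    have h2 : M ⊆ Finset.univ.biUnion A := by
      intro a ha
      by_contra hna
      exact absurd (Finset.mem_sdiff.mpr ⟨ha, hna⟩) (by rw [h1]; exact Finset.notMem_empty a)
    exact le_antisymm (Finset.biUnion_subset.mpr (fun i _ => hsub i)) h2
  | succ k ih =>
    intro A hcard hdisj hsub hEF1
    by_cases hM : M ⊆ Finset.univ.biUnion A
    · refine ⟨A, hdisj, ?_, hEF1, fun i => le_refl _⟩
      exact le_antisymm (Finset.biUnion_subset.mpr (fun i _ => hsub i)) hM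
    · obtain ⟨g, hgM, hgA⟩ := Finset.not_subset.mp hM
      obtain ⟨C, hCdisj, hCsub, hCEF1, hCimp, hCbiU⟩ :=
        envy_cycle_step hn hv hdisj hsub hEF1 hgM hgA
      have hcard' : (M \ Finset.univ.biUnion C).card ≤ k := by
        have hsubset : M \ Finset.univ.biUnion C ⊆ (M \ Finset.univ.biUnion A).erase g := by
          intro a ha
          rw [Finset.mem_sdiff] at ha
          rw [Finset.mem_erase, Finset.mem_sdiff]
          rw [hCbiU, Finset.mem_insert] at ha
          push_neg at ha
          exact ⟨ha.2.1, ha.1, ha.2.2⟩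
        calc (M \ Finset.univ.biUnion C).card
            ≤ ((M \ Finset.univ.biUnion A).erase g).card := Finset.card_le_card hsubset
          _ = (M \ Finset.univ.biUnion A).card - 1 :=
              Finset.card_erase_of_mem (Finset.mem_sdiff.mpr ⟨hgM, hgA⟩)
          _ ≤ k := by omega
      obtain ⟨A', h1, h2, h3, h4⟩ := ih C hcard' hCdisj hCsub hCEF1
      exact ⟨A', h1, h2, h3, fun i => (hCimp i).trans (h4 i)⟩

/-- envy-cycle elimination completes an EF1 partial allocation while
weakly increasing every agent's utility. -/
theorem envy_cycle_elimination (n : ℕ) (hn : 0 < n) (M : Finset ℕ)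
    (v : Fin n → ℕ → ℝ) (hv : ∀ i g, 0 ≤ v i g)
    (A : Fin n → Finset ℕ)
    (hdisj : ∀ i j : Fin n, i ≠ j → Disjoint (A i) (A j))
    (hsub : ∀ i, A i ⊆ M)
    (hEF1 : EF1 n v A) :
    ∃ A' : Fin n → Finset ℕ,
      (∀ i j : Fin n, i ≠ j → Disjoint (A' i) (A' j)) ∧
      Finset.univ.biUnion A' = M ∧
      EF1 n v A' ∧
      ∀ i, bundleVal (v i) (A i) ≤ bundleVal (v i) (A' i) :=
  envy_cycle_aux hn hv (M \ Finset.univ.biUnion A).card A (le_refl _) hdisj hsub hEF1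
end

section
/- In the envy graph of an allocation among agents with additive valuations, if every agent has at least one incoming envy edge, then the envy graph contains a directed cycle; rotating bundles along such a cycle (giving each agent in the cycle the bundle of the agent they envy) strictly increases the total utility Σ_i v_i(A_i) while leaving the multiset of bundles unchanged. -/
open Finset

/-- if every agent has an incoming envy edge, the envy graph has a cycle,
and rotating bundles along it (a nontrivial permutation, strictly improving everyone it
moves) strictly increases total utility while the multiset of bundles is unchanged. -/
theorem envy_cycle_rotation (n : ℕ) (hn : 0 < n)
    (v : Fin n → ℕ → ℝ) (A : Fin n → Finset ℕ)
    (h : ∀ i : Fin n, ∃ j : Fin n, bundleVal (v j) (A j) < bundleVal (v j) (A i)) :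
    ∃ σ : Equiv.Perm (Fin n),
      (∃ i, σ i ≠ i) ∧
      (∀ i, σ i ≠ i → bundleVal (v i) (A i) < bundleVal (v i) (A (σ i))) ∧
      ∑ i, bundleVal (v i) (A i) < ∑ i, bundleVal (v i) (A (σ i)) := by
  classical
  choose f hf using h
  -- f i envies A i
  have hne : Nonempty (Fin n) := ⟨⟨0, hn⟩⟩
  -- find a periodic point of f
  obtain ⟨a, b, hab, heq⟩ : ∃ a b : ℕ, a ≠ b ∧ f^[a] (Classical.arbitrary (Fin n))
      = f^[b] (Classical.arbitrary (Fin n)) := by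
    obtain ⟨a, b, hab, heq⟩ := Finite.exists_ne_map_eq_of_infinite
      (fun k : ℕ => f^[k] (Classical.arbitrary (Fin n)))
    exact ⟨a, b, hab, heq⟩
  wlog hlt : a < b generalizing a b
  · exact this b a hab.symm heq.symm (by omega)
  set x0 : Fin n := f^[a] (Classical.arbitrary (Fin n)) with hx0
  have hper : Function.IsPeriodicPt f (b - a) x0 := by
    unfold Function.IsPeriodicPt Function.IsFixedPt
    rw [hx0, ← Function.iterate_add_apply]
    rw [show b - a + a = b by omega]
    exact heq.symm
  set p := Function.minimalPeriod f x0 with hp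
  have hppos : 0 < p := hper.minimalPeriod_pos (by omega)
  have hiter : f^[p] x0 = x0 := Function.iterate_minimalPeriod
  have hinj : (Set.Iio p).InjOn (f^[·] x0) := Function.iterate_injOn_Iio_minimalPeriod
  -- p ≥ 2
  have hfne : ∀ i, f i ≠ i := by
    intro i hfi
    have := hf i
    rw [hfi] at this
    exact lt_irrefl _ this
  have hp2 : 2 ≤ p := by
    by_contra h2
    push_neg at h2
    have hp1 : p = 1 := by omega
    apply hfne x0
    have h1 := hiter
    rw [hp1] at h1
    simpa using h1
  -- the cycle list, in reverse order so formPerm maps each agent to the one it envies... rather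
  -- L = [f^[p-1] x0, ..., f^[1] x0, f^[0] x0], σ = L.formPerm sends f^[m] x0 to f^[m-1] x0
  set L : List (Fin n) := (List.range p).map (fun m => f^[p - 1 - m] x0) with hL
  have hlen : L.length = p := by simp [hL]
  have hget : ∀ (i : ℕ) (hi : i < L.length), L[i] = f^[p - 1 - i] x0 := by
    intro i hi
    simp [hL]
  have hnodup : L.Nodup := by
    refine List.Nodup.map_on ?_ (List.nodup_range : (List.range p).Nodup)
    intro m1 hm1 m2 hm2 hmeq
    simp only [List.mem_range] at hm1 hm2
    have := hinj (Set.mem_Iio.2 (by omega : p - 1 - m1 < p))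
      (Set.mem_Iio.2 (by omega : p - 1 - m2 < p)) hmeq
    omega
  set σ : Equiv.Perm (Fin n) := L.formPerm with hσ
  -- key : for every y ∈ L, f (σ y) = y and σ y ∈ L
  have hkey : ∀ y ∈ L, f (σ y) = y := by
    intro y hy
    obtain ⟨i, hi, rfl⟩ := List.getElem_of_mem hy
    rw [hσ, List.formPerm_apply_getElem L hnodup i hi]
    rw [hget i hi, hget _ (Nat.mod_lt _ (by omega))]
    rw [hlen]
    rcases Nat.lt_or_ge (i + 1) p with hip | hip
    · rw [Nat.mod_eq_of_lt hip]
      rw [show p - 1 - i = (p - 1 - (i + 1)) + 1 by omega]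
      rw [Function.iterate_succ_apply']
    · have hie : i = p - 1 := by rw [hlen] at hi; omega
      subst hie
      rw [show p - 1 + 1 = p by omega, Nat.mod_self]
      rw [show p - 1 - (p - 1) = 0 by omega]
      rw [show p - 1 - 0 = p - 1 by omega]
      simp only [Function.iterate_zero, id]
      conv_rhs => rw [← hiter, show p = (p - 1) + 1 by omega,
        Function.iterate_succ_apply']
  have hmoves : ∀ i : Fin n, σ i ≠ i → i ∈ L := by
    intro i hi
    by_contra hmem
    exact hi (List.formPerm_apply_of_notMem hmem)
  have henvy : ∀ i : Fin n, σ i ≠ i →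
      bundleVal (v i) (A i) < bundleVal (v i) (A (σ i)) := by
    intro i hi
    have hiL := hmoves i hi
    have := hkey i hiL
    have hlt := hf (σ i)
    rw [this] at hlt
    exact hlt
  refine ⟨σ, ?_, henvy, ?_⟩
  · -- σ moves x0 = L[p-1]
    refine ⟨x0, ?_⟩
    intro hfix
    have hx0mem : x0 ∈ L := by
      have : L[p-1]'(by omega) = x0 := by
        rw [hget _ (by omega)]
        simp [show p - 1 - (p - 1) = 0 by omega]
      rw [← this]
      exact List.getElem_mem _
    have := hkey x0 hx0mem
    rw [hfix] at this
    exact hfne x0 this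
  · -- sum strictly increases
    have hx0mem : x0 ∈ L := by
      have : L[p-1]'(by omega) = x0 := by
        rw [hget _ (by omega)]
        simp [show p - 1 - (p - 1) = 0 by omega]
      rw [← this]
      exact List.getElem_mem _
    have hx0move : σ x0 ≠ x0 := by
      intro hfix
      have := hkey x0 hx0mem
      rw [hfix] at this
      exact hfne x0 this
    refine Finset.sum_lt_sum (fun i _ => ?_) ⟨x0, Finset.mem_univ _, (henvy x0 hx0move)⟩
    by_cases hi : σ i = i
    · rw [hi]
    · exact le_of_lt (henvy i hi)
end

section
/- Order-preserving normalization exists: given an additive valuation v on goods {1,...,m} with v(1) ≥ v(2) ≥ ... ≥ v(m) and μ^d(M) = 1, there exists an additive valuation v̄ with v̄(1) ≥ v̄(2) ≥ ... ≥ v̄(m), v̄(g) ≤ v(g) for every good g, and such that there is a partition of M into d bundles each of v̄-value exactly 1 (so v̄ is d-normalized with μ̄^d(M) = 1). -/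
open Finset

/-- From `mms v M d = 1` we can extract a partition all of whose bundles have value ≥ 1. -/
theorem exists_good_partition (M : Finset ℕ) (d : ℕ) (hd : 0 < d)
    (v : ℕ → ℝ) (hv : ∀ g, 0 ≤ v g) (hmms : mms v M d = 1) :
    ∃ Q : Fin d → Finset ℕ, IsPartition M d Q ∧ ∀ i, 1 ≤ bundleVal v (Q i) := by
  by_contra hcon
  push_neg at hcon
  classical
  -- trivial partition
  set i0 : Fin d := ⟨0, hd⟩ with hi0
  set P0 : Fin d → Finset ℕ := fun i => if i = i0 then M else ∅ with hP0
  have hP0part : IsPartition M d P0 := by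
    constructor
    · intro i j hij
      by_cases hi : i = i0
      · have hj : j ≠ i0 := fun h => hij (by rw [hi, h])
        simp [hP0, hi, hj]
      · simp [hP0, hi]
    · ext g
      simp only [Finset.mem_biUnion, Finset.mem_univ, true_and]
      constructor
      · rintro ⟨i, hi⟩
        by_cases h : i = i0 <;> simp [hP0, h] at hi
        exact hi
      · intro hg
        exact ⟨i0, by simp [hP0, hg]⟩
  obtain ⟨i1, hi1⟩ := hcon P0 hP0part
  set V : Finset ℝ := (M.powerset.image (bundleVal v)).filter (· < 1) with hV
  have hVne : V.Nonempty := by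
    refine ⟨bundleVal v (P0 i1), ?_⟩
    simp only [hV, Finset.mem_filter, Finset.mem_image, Finset.mem_powerset]
    refine ⟨⟨P0 i1, ?_, rfl⟩, hi1⟩
    · rw [← hP0part.2]; intro x hx; exact Finset.mem_biUnion.2 ⟨i1, Finset.mem_univ _, hx⟩
  set c : ℝ := V.max' hVne with hc
  have hclt : c < 1 := by
    have := V.max'_mem hVne
    simp only [hV, Finset.mem_filter] at this
    exact this.2
  have hub : ∀ x ∈ {x : ℝ | ∃ P : Fin d → Finset ℕ, IsPartition M d P ∧
      ∀ i, x ≤ bundleVal v (P i)}, x ≤ c := by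
    rintro x ⟨P, hP, hx⟩
    obtain ⟨i, hi⟩ := hcon P hP
    have hmem : bundleVal v (P i) ∈ V := by
      simp only [hV, Finset.mem_filter, Finset.mem_image, Finset.mem_powerset]
      refine ⟨⟨P i, ?_, rfl⟩, hi⟩
      rw [← hP.2]; intro y hy; exact Finset.mem_biUnion.2 ⟨i, Finset.mem_univ _, hy⟩
    exact (hx i).trans (V.le_max' _ hmem)
  have h0mem : (0 : ℝ) ∈ {x : ℝ | ∃ P : Fin d → Finset ℕ, IsPartition M d P ∧
      ∀ i, x ≤ bundleVal v (P i)} := by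
    refine ⟨P0, hP0part, fun i => ?_⟩
    exact Finset.sum_nonneg fun g _ => hv g
  have : (1 : ℝ) ≤ c := by
    rw [← hmms]
    exact csSup_le ⟨0, h0mem⟩ hub
  linarith

/-- an order-preserving d-normalization exists. -/
theorem order_preserving_normalization (m d : ℕ) (hd : 0 < d)
    (v : ℕ → ℝ) (hv : ∀ g, 0 ≤ v g)
    (hord : ∀ a b : ℕ, a ≤ b → v b ≤ v a)
    (hmms : mms v (Finset.Icc 1 m) d = 1) :
    ∃ vb : ℕ → ℝ,
      (∀ a b : ℕ, a ≤ b → vb b ≤ vb a) ∧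
      (∀ g ∈ Finset.Icc 1 m, vb g ≤ v g) ∧
      ∃ P : Fin d → Finset ℕ, IsPartition (Finset.Icc 1 m) d P ∧
        ∀ i, bundleVal vb (P i) = 1 := by
  classical
  set M := Finset.Icc 1 m with hM
  obtain ⟨Q, hQ, hs⟩ := exists_good_partition M d hd v hv hmms
  have hQsub : ∀ i, Q i ⊆ M := by
    intro i x hx; rw [← hQ.2]; exact Finset.mem_biUnion.2 ⟨i, Finset.mem_univ _, hx⟩
  -- m is positive
  have hm : 0 < m := by
    by_contra h
    push_neg at h
    interval_cases m
    have h1 := hs ⟨0, hd⟩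
    have : Q ⟨0, hd⟩ = ∅ := Finset.subset_empty.1 (by simpa [hM] using hQsub ⟨0, hd⟩)
    rw [this] at h1
    simp [bundleVal] at h1
    linarith
  -- bundle index of a good
  set idx : ℕ → Fin d := fun h => if hh : ∃ i, h ∈ Q i then hh.choose else ⟨0, hd⟩ with hidxdef
  have hidx : ∀ (i : Fin d) (h : ℕ), h ∈ Q i → idx h = i := by
    intro i h hh
    have hex : ∃ j, h ∈ Q j := ⟨i, hh⟩
    have hspec : h ∈ Q hex.choose := hex.choose_spec
    have : idx h = hex.choose := by simp [hidxdef, hex]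
    rw [this]
    by_contra hne
    exact (Finset.disjoint_left.1 (hQ.1 _ _ hne) hspec) hh
  set u : ℕ → ℝ := fun h => v h / bundleVal v (Q (idx h)) with hu
  have hspos : ∀ i, (0:ℝ) < bundleVal v (Q i) := fun i => lt_of_lt_of_le one_pos (hs i)
  have hu_le : ∀ i (h : ℕ), h ∈ Q i → u h ≤ v h := by
    intro i h hh
    rw [hu]
    simp only
    rw [hidx i h hh]
    exact div_le_self (hv h) (hs i)
  have hu_sum : ∀ i, ∑ h ∈ Q i, u h = 1 := by
    intro i
    have : ∀ h ∈ Q i, u h = v h / bundleVal v (Q i) := by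
      intro h hh; rw [hu]; simp only; rw [hidx i h hh]
    rw [Finset.sum_congr rfl this, ← Finset.sum_div]
    exact div_self (ne_of_gt (hspos i))
  -- sorting
  set f : Fin m → ℝ := fun j => u (j.val + 1) with hf
  set σ := Tuple.sort f with hσ
  have hmono : Monotone (f ∘ σ) := Tuple.monotone_sort f
  set τ : Fin m → Fin m := fun k => σ (Fin.rev k) with hτ
  have hτinj : Function.Injective τ := by
    intro a b hab
    exact Fin.rev_injective (σ.injective hab)
  have hτsurj : Function.Surjective τ := by
    intro b
    exact ⟨Fin.rev (σ.symm b), by simp [hτ]⟩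
  set w : Fin m → ℝ := fun k => f (τ k) with hw
  have hwanti : ∀ j k : Fin m, j ≤ k → w k ≤ w j := by
    intro j k hjk
    exact hmono (by simpa [Fin.rev_le_rev] using hjk : Fin.rev k ≤ Fin.rev j)
  set τ' : ℕ → ℕ := fun g => if h : g - 1 < m then (τ ⟨g - 1, h⟩).val + 1 else 0 with hτ'
  have hτ'mem : ∀ g ∈ M, τ' g ∈ M := by
    intro g hg
    have h1 : g - 1 < m := by
      rw [hM, Finset.mem_Icc] at hg
      omega
    simp only [hτ', dif_pos h1, hM, Finset.mem_Icc]
    have := (τ ⟨g - 1, h1⟩).isLt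
    omega
  have hτ'inj : ∀ g ∈ M, ∀ g' ∈ M, τ' g = τ' g' → g = g' := by
    intro g hg g' hg' he
    rw [hM, Finset.mem_Icc] at hg hg'
    have h1 : g - 1 < m := by omega
    have h2 : g' - 1 < m := by omega
    simp only [hτ', dif_pos h1, dif_pos h2] at he
    have : τ ⟨g - 1, h1⟩ = τ ⟨g' - 1, h2⟩ := Fin.ext (by omega)
    have h3 := hτinj this
    have h4 : g - 1 = g' - 1 := by simp at h3; exact h3
    omega
  have hτ'surj : ∀ h ∈ M, ∃ g ∈ M, τ' g = h := by
    intro h hh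
    rw [hM, Finset.mem_Icc] at hh
    have h1 : h - 1 < m := by omega
    obtain ⟨k, hk⟩ := hτsurj ⟨h - 1, h1⟩
    refine ⟨k.val + 1, ?_, ?_⟩
    · rw [hM, Finset.mem_Icc]; have := k.isLt; omega
    · have h2 : k.val + 1 - 1 < m := by have := k.isLt; omega
      simp only [hτ', dif_pos h2]
      have he : (⟨k.val + 1 - 1, h2⟩ : Fin m) = k := by apply Fin.ext; simp
      rw [he, hk]
      simp only [Fin.val_mk]
      omega
  -- the new valuation
  have hm1 : m - 1 < m := by omega
  set vb : ℕ → ℝ := fun g => if h : g - 1 < m then w ⟨g - 1, h⟩ else w ⟨m - 1, hm1⟩ with hvb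
  have hvb_eq : ∀ g ∈ M, vb g = u (τ' g) := by
    intro g hg
    rw [hM, Finset.mem_Icc] at hg
    have h1 : g - 1 < m := by omega
    simp only [hvb, hτ', dif_pos h1]
    rfl
  refine ⟨vb, ?_, ?_, ?_⟩
  · -- antitone
    intro a b hab
    by_cases hb : b - 1 < m
    · have ha : a - 1 < m := by omega
      simp only [hvb, dif_pos ha, dif_pos hb]
      exact hwanti _ _ (by simp [Fin.mk_le_mk]; omega)
    · by_cases ha : a - 1 < m
      · simp only [hvb, dif_pos ha, dif_neg hb]
        exact hwanti _ _ (by simp [Fin.mk_le_mk]; omega)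
      · simp only [hvb, dif_neg ha, dif_neg hb]
        exact le_refl _
  · -- vb ≤ v on M
    intro g hg
    have hg' := hg
    rw [hM, Finset.mem_Icc] at hg'
    have hk : g - 1 < m := by omega
    -- pigeonhole: some slot j ≤ ⟨g-1⟩ has (τ j).val ≥ g - 1
    have hpig : ∃ j : Fin m, j ≤ ⟨g - 1, hk⟩ ∧ g - 1 ≤ (τ j).val := by
      by_contra hcon
      push_neg at hcon
      have hsub : (Finset.Iic (⟨g - 1, hk⟩ : Fin m)).image (fun j => (τ j).val) ⊆
          Finset.range (g - 1) := by
        intro x hx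
        simp only [Finset.mem_image, Finset.mem_Iic] at hx
        obtain ⟨j, hj, rfl⟩ := hx
        exact Finset.mem_range.2 (hcon j hj)
      have hcard : ((Finset.Iic (⟨g - 1, hk⟩ : Fin m)).image (fun j => (τ j).val)).card
          = g - 1 + 1 := by
        rw [Finset.card_image_of_injective _ (fun a b hab => hτinj (Fin.val_injective hab))]
        simp [Fin.card_Iic]
      have := Finset.card_le_card hsub
      rw [hcard, Finset.card_range] at this
      omega
    obtain ⟨j, hj1, hj2⟩ := hpig
    set h := (τ j).val + 1 with hh
    have hhM : h ∈ M := by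
      rw [hM, Finset.mem_Icc]; have := (τ j).isLt; omega
    obtain ⟨i, hi⟩ : ∃ i, h ∈ Q i := by
      rw [← hQ.2] at hhM
      obtain ⟨i, _, hi⟩ := Finset.mem_biUnion.1 hhM
      exact ⟨i, hi⟩
    have h1 : vb g = w ⟨g - 1, hk⟩ := by simp only [hvb, dif_pos hk]
    have h2 : w ⟨g - 1, hk⟩ ≤ w j := hwanti j _ hj1
    have h3 : w j = u h := rfl
    have h4 : u h ≤ v h := hu_le i h hi
    have h5 : v h ≤ v g := hord g h (by omega)
    linarith
  · -- partition
    set P : Fin d → Finset ℕ := fun i => M.filter (fun g => τ' g ∈ Q i) with hP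
    refine ⟨P, ⟨?_, ?_⟩, ?_⟩
    · intro i j hij
      rw [Finset.disjoint_left]
      intro g hgi hgj
      rw [hP] at hgi hgj
      simp only [Finset.mem_filter] at hgi hgj
      exact (Finset.disjoint_left.1 (hQ.1 i j hij) hgi.2) hgj.2
    · ext g
      simp only [Finset.mem_biUnion, Finset.mem_univ, true_and, hP, Finset.mem_filter]
      constructor
      · rintro ⟨i, hg, _⟩; exact hg
      · intro hg
        have := hτ'mem g hg
        rw [← hQ.2] at this
        obtain ⟨i, _, hi⟩ := Finset.mem_biUnion.1 this
        exact ⟨i, hg, hi⟩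
    · intro i
      rw [bundleVal]
      have key : ∑ g ∈ P i, vb g = ∑ h ∈ Q i, u h := by
        apply Finset.sum_bij (fun g _ => τ' g)
        · intro a ha; exact (Finset.mem_filter.1 ha).2
        · intro a ha b hb hab
          exact hτ'inj a (Finset.mem_filter.1 ha).1 b (Finset.mem_filter.1 hb).1 hab
        · intro b hb
          obtain ⟨g, hg, hge⟩ := hτ'surj b (hQsub i hb)
          exact ⟨g, Finset.mem_filter.2 ⟨hg, hge ▸ hb⟩, hge⟩
        · intro a ha
          exact hvb_eq a (Finset.mem_filter.1 ha).1
      rw [key]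
      exact hu_sum i
end

section
/- If some agent strongly envies a bundle B under a partial allocation, then there exists a most envious agent of B: an agent i and a proper subset B' ⊊ B with v_i(B') > v_i(A_i) such that no agent strongly envies B'. -/
open Finset

/-- if some agent strongly envies a bundle B, a most envious agent of B
exists. -/
theorem most_envious_agent_exists (n : ℕ) (v : Fin n → ℕ → ℝ)
    (A : Fin n → Finset ℕ) (B : Finset ℕ)
    (h : ∃ (i : Fin n) (g : ℕ), g ∈ B ∧
      bundleVal (v i) (A i) < bundleVal (v i) (B.erase g)) :
    ∃ (i : Fin n) (B' : Finset ℕ), B' ⊂ B ∧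
      bundleVal (v i) (A i) < bundleVal (v i) B' ∧
      ∀ j : Fin n, ¬ ∃ g ∈ B', bundleVal (v j) (A j) < bundleVal (v j) (B'.erase g) := by
  obtain ⟨i, g, hg, hlt⟩ := h
  set S : Finset (Finset ℕ) :=
    B.powerset.filter (fun C => ∃ j, bundleVal (v j) (A j) < bundleVal (v j) C) with hS
  have hmem : B.erase g ∈ S := by
    simp only [hS, mem_filter, mem_powerset]
    exact ⟨erase_subset _ _, i, hlt⟩
  obtain ⟨C, hC, hCmin⟩ := S.exists_min_image Finset.card ⟨_, hmem⟩
  simp only [hS, mem_filter, mem_powerset] at hC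
  obtain ⟨hCB, j, hj⟩ := hC
  have hcard : C.card < B.card := by
    have h1 : C.card ≤ (B.erase g).card := hCmin _ hmem
    have h2 : (B.erase g).card < B.card := card_erase_lt_of_mem hg
    omega
  refine ⟨j, C, ⟨hCB, fun hsub => absurd (card_le_card hsub) (by omega)⟩, hj, ?_⟩
  rintro k ⟨g', hg', hk⟩
  have hmem' : C.erase g' ∈ S := by
    simp only [hS, mem_filter, mem_powerset]
    exact ⟨(erase_subset _ _).trans hCB, k, hk⟩
  have := hCmin _ hmem'
  have := card_erase_lt_of_mem hg'
  omega
end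

section
/- MMS-guarantee via counting contradiction: under the hypotheses of the ordered bag-filling algorithm (m > 2n, goods in non-increasing order for agent i, μ_i^n(M \ {n+1,...,2n}) ≥ 1), combining v_i(M \ {g_j : j ∈ [n]}) ≥ v_i(M) − v_i({n+1,...,2n}), the big-goods bound v_i(M \ {n+1,...,2n}) ≥ n + Σ_{g: v_i(g)>1}(v_i(g)−1) = Σ_{j=1}^n max{1, v_i(j)} (when goods with value > 1 are exactly among the first n), and the deficiency bound Σ_j v_i(B̂_j \ {g_j}) < Σ_j max{1, v_i(j)} yields a contradiction; hence every agent receives a bag of value at least 1, and the algorithm's output is 1-out-of-⌈3n/2⌉ MMS. -/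
open Finset

/-- the counting argument yields a contradiction, hence every agent
receives a bag of value at least 1. -/
theorem mms_counting_contradiction (n m : ℕ) (hn : 0 < n) (hm : 2 * n < m)
    (v : ℕ → ℝ) (hv : ∀ g, 0 ≤ v g)
    (hord : ∀ a b : ℕ, a ≤ b → v b ≤ v a)
    (h1 : 1 ≤ mms v (Finset.Icc 1 m \ Finset.Icc (n + 1) (2 * n)) n)
    (B : Fin n → Finset ℕ) (gsec : Fin n → ℕ)
    (hpart : IsPartition (Finset.Icc 1 m) n B)
    (hg : ∀ j, gsec j ∈ B j)
    (hginj : Function.Injective gsec)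
    (himg : bundleVal v (Finset.Icc 1 m) - bundleVal v (Finset.Icc (n + 1) (2 * n)) ≤
      bundleVal v (Finset.Icc 1 m \ Finset.univ.image gsec))
    (hbig : (∑ j ∈ Finset.Icc 1 n, max 1 (v j)) ≤
      bundleVal v (Finset.Icc 1 m \ Finset.Icc (n + 1) (2 * n)))
    (hdef : ∑ j : Fin n, bundleVal v ((B j).erase (gsec j)) <
      ∑ j ∈ Finset.Icc 1 n, max 1 (v j)) :
    False := by
  classical
  set M := Finset.Icc 1 m with hMdef
  set D := Finset.Icc (n + 1) (2 * n) with hDdef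
  have hDM : D ⊆ M := by
    intro x hx
    simp only [hDdef, hMdef, Finset.mem_Icc] at hx ⊢
    omega
  have hMD : bundleVal v (M \ D) = bundleVal v M - bundleVal v D := by
    unfold bundleVal
    rw [Finset.sum_sdiff_eq_sub hDM]
  have hset : M \ Finset.univ.image gsec
      = Finset.univ.biUnion (fun j => (B j).erase (gsec j)) := by
    ext x
    simp only [Finset.mem_sdiff, Finset.mem_biUnion, Finset.mem_erase, Finset.mem_image,
      Finset.mem_univ, true_and]
    constructor
    · rintro ⟨hxM, hx⟩
      rw [← hpart.2] at hxM
      simp only [Finset.mem_biUnion, Finset.mem_univ, true_and] at hxM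
      obtain ⟨j, hj⟩ := hxM
      exact ⟨j, fun h => hx ⟨j, h.symm⟩, hj⟩
    · rintro ⟨j, hne, hx⟩
      refine ⟨?_, ?_⟩
      · rw [← hpart.2]; exact Finset.mem_biUnion.2 ⟨j, Finset.mem_univ _, hx⟩
      · rintro ⟨k, hk⟩
        by_cases hkj : k = j
        · exact hne (hkj ▸ hk.symm)
        · exact absurd hx (Finset.disjoint_left.1 (hpart.1 k j hkj) (hk ▸ hg k))
  have hsum : bundleVal v (M \ Finset.univ.image gsec)
      = ∑ j : Fin n, bundleVal v ((B j).erase (gsec j)) := by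
    rw [hset]
    unfold bundleVal
    rw [Finset.sum_biUnion]
    intro a _ b _ hab
    exact Finset.disjoint_of_subset_left (Finset.erase_subset _ _)
      (Finset.disjoint_of_subset_right (Finset.erase_subset _ _) (hpart.1 a b hab))
  linarith
end
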